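/- Let α > 1, 0 < ε ≤ 1, and let h : (0,1] → ℝ be positive, monotone increasing, with h(x) ≤ x^α for all x ∈ (0,1]. Then for every s > 0: ∫_0^ε ∫_0^x exp(−2s ∫_y^x dt/h(t)) dy dx ≤ ε^{α+1}/(2s(α+1)). In particular the integral kernel (x,y) ↦ exp(−s ∫_y^x dt/h(t)) · 1_{y<x} is square integrable on (0,ε)×(0,ε), i.e. the operator P_{0,s}^{1/h} is Hilbert–Schmidt on L²(0,ε). -/

import Mathlib

open MeasureTheory Set Real
open scoped ENNReal

/-! Since `h` is increasing and `h ≤ x ^ α`, on `[y, x]` we have `1 / h ≥ 1 / h x ≥ x ^ (-α)`, so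
`∫_y^x dt / h ≥ (x - y) / x ^ α`. The inner integral is therefore dominated by
`∫_{-∞}^x exp (-2s (x - y) / x ^ α) dy = x ^ α / (2s)`, and integrating `x ^ α / (2s)` over `(0, ε)`
gives the bound. The kernel is bounded by `1`, and it is measurable because
`∫_y^x dt / h = H x - H y` for the monotone primitive `H x = ∫_ε^x dt / h`; hence it lies in every
`Lᵖ` of the finite measure space `(0, ε)²`. -/

lemma intervalIntegrable_one_div_of_monotoneOn {h : ℝ → ℝ} {S : Set ℝ} {a b : ℝ}
    (hmono : MonotoneOn h S) (hpos : ∀ t ∈ S, 0 < h t) (hab : uIcc a b ⊆ S) :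
    IntervalIntegrable (fun t => 1 / h t) volume a b :=
  AntitoneOn.intervalIntegrable fun _ hu _ hv huv =>
    one_div_le_one_div_of_le (hpos _ (hab hu)) (hmono (hab hu) (hab hv) huv)

lemma sub_div_le_integral_one_div_of_monotoneOn {h : ℝ → ℝ} {x y : ℝ} (hyx : y ≤ x)
    (hmono : MonotoneOn h (Icc y x)) (hpos : ∀ t ∈ Icc y x, 0 < h t) :
    (x - y) / h x ≤ ∫ t in y..x, 1 / h t := by
  have hint := intervalIntegrable_one_div_of_monotoneOn hmono hpos (uIcc_of_le hyx).subset
  calc (x - y) / h x = ∫ _ in y..x, 1 / h x := by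
        rw [intervalIntegral.integral_const, smul_eq_mul, mul_one_div]
    _ ≤ ∫ t in y..x, 1 / h t :=
        intervalIntegral.integral_mono_on hyx intervalIntegrable_const hint fun t ht =>
          one_div_le_one_div_of_le (hpos t ht) (hmono ht (right_mem_Icc.2 hyx) ht.2)

lemma exp_neg_mul_sub (c x y : ℝ) : exp (-(c * (x - y))) = exp (c * y) * exp (-(c * x)) := by
  rw [← exp_add]; ring_nf

lemma integrableOn_exp_neg_mul_sub_Iic {c : ℝ} (hc : 0 < c) (x : ℝ) :
    IntegrableOn (fun y => exp (-(c * (x - y)))) (Iic x) := by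
  simp_rw [exp_neg_mul_sub]
  exact (integrableOn_exp_mul_Iic hc x).mul_const _

lemma setIntegral_exp_neg_mul_sub_le {c x : ℝ} (hc : 0 < c) {U : Set ℝ} (hU : U ⊆ Iic x) :
    ∫ y in U, exp (-(c * (x - y))) ≤ c⁻¹ := by
  calc ∫ y in U, exp (-(c * (x - y))) ≤ ∫ y in Iic x, exp (-(c * (x - y))) :=
        setIntegral_mono_set (integrableOn_exp_neg_mul_sub_Iic hc x)
          (ae_of_all _ fun _ => (exp_pos _).le) (ae_of_all _ hU)
    _ = c⁻¹ := by
        simp_rw [exp_neg_mul_sub]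
        rw [integral_mul_const, integral_exp_mul_Iic hc, div_mul_eq_mul_div, ← exp_add,
          add_neg_cancel, exp_zero, one_div]

lemma setIntegral_exp_neg_mul_integral_one_div_le {h : ℝ → ℝ} {a b x : ℝ} (ha : 0 < a)
    (hbx : b < x) (hmono : MonotoneOn h (Ioc b x)) (hpos : ∀ t ∈ Ioc b x, 0 < h t) :
    ∫ y in Ioo b x, exp (-(a * ∫ t in y..x, 1 / h t)) ≤ h x / a := by
  have hc : 0 < a / h x := div_pos ha (hpos x (right_mem_Ioc.2 hbx))
  have hU : Ioo b x ⊆ Iic x := fun _ hy => hy.2.le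
  have hle : ∀ y ∈ Ioo b x,
      exp (-(a * ∫ t in y..x, 1 / h t)) ≤ exp (-(a / h x * (x - y))) := by
    intro y hy
    have hsub : Icc y x ⊆ Ioc b x := Icc_subset_Ioc hy.1 le_rfl
    have hlow := sub_div_le_integral_one_div_of_monotoneOn hy.2.le (hmono.mono hsub)
      fun t ht => hpos t (hsub ht)
    rw [exp_le_exp, neg_le_neg_iff, div_mul_eq_mul_div, mul_div_assoc]
    exact mul_le_mul_of_nonneg_left hlow ha.le
  calc ∫ y in Ioo b x, exp (-(a * ∫ t in y..x, 1 / h t))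
      ≤ ∫ y in Ioo b x, exp (-(a / h x * (x - y))) :=
        integral_mono_of_nonneg (ae_of_all _ fun _ => (exp_pos _).le)
          ((integrableOn_exp_neg_mul_sub_Iic hc x).mono_set hU)
          (ae_restrict_of_forall_mem measurableSet_Ioo hle)
    _ ≤ h x / a := by
        simpa only [inv_div] using setIntegral_exp_neg_mul_sub_le hc hU

lemma integral_Ioo_rpow_div {α ε : ℝ} (hα : -1 < α) (hε : 0 ≤ ε) (a : ℝ) :
    ∫ x in Ioo 0 ε, x ^ α / a = ε ^ (α + 1) / (a * (α + 1)) := by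
  rw [integral_div, ← integral_Ioc_eq_integral_Ioo, ← intervalIntegral.integral_of_le hε,
    integral_rpow (Or.inl hα), zero_rpow (by linarith), sub_zero, div_div, mul_comm]

lemma integral_Ioo_integral_Ioo_exp_neg_mul_integral_one_div_le {h : ℝ → ℝ} {α ε a : ℝ}
    (hα : -1 < α) (hε : 0 ≤ ε) (ha : 0 < a)
    (hmono : MonotoneOn h (Ioc 0 ε)) (hpos : ∀ t ∈ Ioc 0 ε, 0 < h t)
    (hbound : ∀ x ∈ Ioc 0 ε, h x ≤ x ^ α) :
    ∫ x in Ioo 0 ε, ∫ y in Ioo 0 x, exp (-(a * ∫ t in y..x, 1 / h t))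
      ≤ ε ^ (α + 1) / (a * (α + 1)) := by
  have hrpow : IntegrableOn (fun x : ℝ => x ^ α / a) (Ioo 0 ε) := by
    have := (intervalIntegral.intervalIntegrable_rpow' (a := 0) (b := ε) hα).div_const a
    rwa [intervalIntegrable_iff_integrableOn_Ioo_of_le hε] at this
  have hinner : ∀ x ∈ Ioo 0 ε,
      ∫ y in Ioo 0 x, exp (-(a * ∫ t in y..x, 1 / h t)) ≤ x ^ α / a := by
    intro x hx
    have hsub : Ioc 0 x ⊆ Ioc 0 ε := Ioc_subset_Ioc_right hx.2.le
    exact (setIntegral_exp_neg_mul_integral_one_div_le ha hx.1 (hmono.mono hsub)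
      fun t ht => hpos t (hsub ht)).trans
      (div_le_div_of_nonneg_right (hbound x (Ioo_subset_Ioc_self hx)) ha.le)
  calc _ ≤ ∫ x in Ioo 0 ε, x ^ α / a :=
        integral_mono_of_nonneg (ae_of_all _ fun _ => integral_nonneg fun _ => (exp_pos _).le)
          hrpow (ae_restrict_of_forall_mem measurableSet_Ioo hinner)
    _ = _ := integral_Ioo_rpow_div hα hε a

lemma aemeasurable_intervalIntegral_restrict_prod {f : ℝ → ℝ} {S : Set ℝ} {c : ℝ}
    (hS : MeasurableSet S) (hSc : S.OrdConnected) (hc : c ∈ S)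
    (hf : ∀ a ∈ S, ∀ b ∈ S, IntervalIntegrable f volume a b) (hf0 : ∀ t ∈ S, 0 ≤ f t) :
    AEMeasurable (fun p : ℝ × ℝ => ∫ t in p.2..p.1, f t) (volume.restrict (S ×ˢ S)) := by
  set F : ℝ → ℝ := fun x => ∫ t in c..x, f t
  have hF : MonotoneOn F S := fun x hx y hy hxy => by
    rw [← sub_nonneg, intervalIntegral.integral_interval_sub_left (hf c hc y hy) (hf c hc x hx)]
    exact intervalIntegral.integral_nonneg hxy fun t ht => hf0 t (hSc.out hx hy ht)
  have hFm : AEMeasurable F (volume.restrict S) := aemeasurable_restrict_of_monotoneOn hS hF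
  have hdiff : AEMeasurable (fun p : ℝ × ℝ => F p.1 - F p.2) (volume.restrict (S ×ˢ S)) := by
    rw [Measure.volume_eq_prod, ← Measure.prod_restrict]
    exact hFm.comp_fst.sub hFm.comp_snd
  refine hdiff.congr (ae_restrict_of_forall_mem (hS.prod hS) fun p hp => ?_)
  exact intervalIntegral.integral_interval_sub_left (hf c hc _ hp.1) (hf c hc _ hp.2)

lemma memLp_kernel_exp_neg_mul_integral_one_div {h : ℝ → ℝ} {ε s : ℝ} (hε : 0 < ε)
    (hs : 0 ≤ s) (hmono : MonotoneOn h (Ioc 0 ε)) (hpos : ∀ t ∈ Ioc 0 ε, 0 < h t)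
    (p : ℝ≥0∞) :
    MemLp (fun q : ℝ × ℝ => if q.2 < q.1 then exp (-(s * ∫ t in q.2..q.1, 1 / h t)) else 0)
      p (volume.restrict (Ioo 0 ε ×ˢ Ioo 0 ε)) := by
  have : IsFiniteMeasure (volume.restrict (Ioo (0:ℝ) ε ×ˢ Ioo (0:ℝ) ε)) :=
    isFiniteMeasure_restrict.2
      ((Metric.isBounded_Ioo 0 ε).prod (Metric.isBounded_Ioo 0 ε)).measure_lt_top.ne
  have hint : ∀ a ∈ Ioc 0 ε, ∀ b ∈ Ioc 0 ε,
      IntervalIntegrable (fun t => 1 / h t) volume a b := fun a ha b hb =>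
    intervalIntegrable_one_div_of_monotoneOn hmono hpos (ordConnected_Ioc.uIcc_subset ha hb)
  have hI := (aemeasurable_intervalIntegral_restrict_prod measurableSet_Ioc ordConnected_Ioc
    (right_mem_Ioc.2 hε) hint fun t ht => (one_div_pos.2 (hpos t ht)).le).mono_measure
    (Measure.restrict_mono (prod_mono Ioo_subset_Ioc_self Ioo_subset_Ioc_self) le_rfl)
  have hK := (measurable_exp.comp_aemeasurable (hI.const_mul s).neg).indicator
    (measurableSet_lt measurable_snd measurable_fst)
  refine MemLp.of_bound (hK.aestronglyMeasurable.congr (ae_of_all _ fun q => ?_)) 1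
    (ae_restrict_of_forall_mem (measurableSet_Ioo.prod measurableSet_Ioo) ?_)
  · simp [indicator_apply]
  rintro ⟨x, y⟩ ⟨hx, hy⟩
  dsimp only
  split_ifs with hyx
  · rw [norm_of_nonneg (exp_pos _).le, exp_le_one_iff, neg_nonpos]
    exact mul_nonneg hs (intervalIntegral.integral_nonneg hyx.le fun t ht =>
      (one_div_pos.2 (hpos t ⟨hy.1.trans_le ht.1, ht.2.trans hx.2.le⟩)).le)
  · simp

/-- The kernel of `P_{0,s}^{1/h}` is square integrable on `(0,ε)²`, i.e. the operator is
Hilbert–Schmidt, with the quantitative bound `∫_0^ε ∫_0^x exp(−2s∫_y^x dt/h(t)) dy dx ≤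
ε^{α+1}/(2s(α+1))`. -/
theorem stmt_10 (α ε : ℝ) (hα : 1 < α) (hε : 0 < ε) (hε1 : ε ≤ 1)
    (h : ℝ → ℝ)
    (hpos : ∀ x ∈ Ioc (0:ℝ) 1, 0 < h x)
    (hmono : ∀ x ∈ Ioc (0:ℝ) 1, ∀ y ∈ Ioc (0:ℝ) 1, x ≤ y → h x ≤ h y)
    (hbound : ∀ x ∈ Ioc (0:ℝ) 1, h x ≤ x ^ α)
    (s : ℝ) (hs : 0 < s) :
    (∫ x in Ioo 0 ε, ∫ y in Ioo 0 x,
        Real.exp (-(2 * s * ∫ t in y..x, 1 / h t)) ≤ ε ^ (α + 1) / (2 * s * (α + 1))) ∧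
    MemLp (fun p : ℝ × ℝ =>
        if p.2 < p.1 then Real.exp (-(s * ∫ t in p.2..p.1, 1 / h t)) else 0)
      2 (volume.restrict (Ioo (0:ℝ) ε ×ˢ Ioo (0:ℝ) ε)) := by
  have hsub : Ioc 0 ε ⊆ Ioc 0 1 := Ioc_subset_Ioc_right hε1
  have hmono' : MonotoneOn h (Ioc 0 ε) := fun x hx y hy => hmono x (hsub hx) y (hsub hy)
  have hpos' : ∀ t ∈ Ioc 0 ε, 0 < h t := fun t ht => hpos t (hsub ht)
  exact ⟨integral_Ioo_integral_Ioo_exp_neg_mul_integral_one_div_le (by linarith) hε.le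
      (by positivity) hmono' hpos' fun x hx => hbound x (hsub hx),
    memLp_kernel_exp_neg_mul_integral_one_div hε hs.le hmono' hpos' 2⟩
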